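/- arXiv:0710.1543 — 7 statements merged into one kernel-verified Lean document; each statement's English description precedes it below -/
import Mathlib

section
/- Let K be a commutative ring in which 2 is invertible, 𝔪 a K-module, and [·,·,·] : 𝔪×𝔪×𝔪 → 𝔪 a trilinear map satisfying (LT1) [X,Y,Z] = -[Y,X,Z] and (LT2) [X,Y,Z] + [Y,Z,X] + [Z,X,Y] = 0. Write R(X,Y)Z := [X,Y,Z], M(X,Z)Y := [X,Y,Z]. Then the following conditions on the bracket are pairwise equivalent: (LT3) R(X,Y)[U,V,W] = [R(X,Y)U,V,W] + [U,R(X,Y)V,W] + [U,V,R(X,Y)W] for all X,Y,U,V,W; (LT3a) [R(X,Y), R(U,V)] = R(R(X,Y)U, V) + R(U, R(X,Y)V) for all X,Y,U,V (bracket = commutator of endomorphisms); (LT3b) [R(X,Y), M(U,W)] = M(R(X,Y)U, W) + M(U, R(X,Y)W) for all X,Y,U,W; (LT3c) M(X, R(U,V)W) = -M(V,W)∘M(X,U) + M(U,W)∘M(X,V) + R(U,V)∘M(X,W) for all X,U,V,W. -/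
/-! Each of (LT3a), (LT3b), (LT3c) is (LT3) evaluated at one of the variables `W`, `V`, `Y`
and read as an identity of endomorphisms; for (LT3c) one term also needs (LT1) to move
`R(X,Y)U` into the first slot. -/

section TripleDerivation

variable {K M : Type*} [CommRing K] [AddCommGroup M] [Module K M]

def IsTripleDerivation (T : M →ₗ[K] M →ₗ[K] M →ₗ[K] M) (D : Module.End K M) : Prop :=
  ∀ U V W, D (T U V W) = T (D U) V W + T U (D V) W + T U V (D W)

variable (T : M →ₗ[K] M →ₗ[K] M →ₗ[K] M) (D : Module.End K M)

theorem isTripleDerivation_iff_commutator_eq :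
    IsTripleDerivation T D ↔ ∀ U V, D * T U V - T U V * D = T (D U) V + T U (D V) := by
  refine forall₂_congr fun U V => ?_
  rw [LinearMap.ext_iff]
  refine forall_congr' fun W => ?_
  simp only [LinearMap.sub_apply, Module.End.mul_apply, LinearMap.add_apply, sub_eq_iff_eq_add]

theorem isTripleDerivation_iff_commutator_flip_eq :
    IsTripleDerivation T D ↔
      ∀ U W, D * (T U).flip W - (T U).flip W * D = (T (D U)).flip W + (T U).flip (D W) := by
  refine ⟨fun h U W => ?_, fun h U V W => ?_⟩
  · ext V
    simp only [LinearMap.sub_apply, Module.End.mul_apply, LinearMap.add_apply,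
      LinearMap.flip_apply, h U V W]
    abel
  · have := LinearMap.congr_fun (h U W) V
    simp only [LinearMap.sub_apply, Module.End.mul_apply, LinearMap.add_apply,
      LinearMap.flip_apply, sub_eq_iff_eq_add'] at this
    rw [this]
    abel

end TripleDerivation

theorem flip_apply_bracket_eq_iff {K M : Type*} [CommRing K] [AddCommGroup M] [Module K M]
    (T : M →ₗ[K] M →ₗ[K] M →ₗ[K] M) (skew : ∀ X Y Z, T X Y Z = - T Y X Z) (X U V W : M) :
    (T X).flip (T U V W) =
        -((T V).flip W * (T X).flip U) + (T U).flip W * (T X).flip V + T U V * (T X).flip W ↔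
      ∀ Y, T X Y (T U V W) = T (T X Y U) V W + T U (T X Y V) W + T U V (T X Y W) := by
  rw [LinearMap.ext_iff]
  refine forall_congr' fun Y => ?_
  simp only [LinearMap.add_apply, LinearMap.neg_apply, Module.End.mul_apply,
    LinearMap.flip_apply, skew V (T X Y U) W, neg_neg]

theorem derivation_operator_forms_equivalent_general
    (K : Type*) [CommRing K]
    (𝔪 : Type*) [AddCommGroup 𝔪] [Module K 𝔪]
    (T : 𝔪 →ₗ[K] 𝔪 →ₗ[K] 𝔪 →ₗ[K] 𝔪)
    (lt1 : ∀ X Y Z, T X Y Z = - T Y X Z) :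
    -- (LT3) ↔ (LT3a)
    ((∀ X Y U V W, T X Y (T U V W) =
        T (T X Y U) V W + T U (T X Y V) W + T U V (T X Y W)) ↔
      (∀ X Y U V, T X Y * T U V - T U V * T X Y =
        T (T X Y U) V + T U (T X Y V))) ∧
    -- (LT3) ↔ (LT3b)
    ((∀ X Y U V W, T X Y (T U V W) =
        T (T X Y U) V W + T U (T X Y V) W + T U V (T X Y W)) ↔
      (∀ X Y U W, T X Y * (T U).flip W - (T U).flip W * T X Y =
        (T (T X Y U)).flip W + (T U).flip (T X Y W))) ∧
    -- (LT3) ↔ (LT3c)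
    ((∀ X Y U V W, T X Y (T U V W) =
        T (T X Y U) V W + T U (T X Y V) W + T U V (T X Y W)) ↔
      (∀ X U V W, (T X).flip (T U V W) =
        -((T V).flip W * (T X).flip U) + (T U).flip W * (T X).flip V +
          T U V * (T X).flip W)) := by
  refine ⟨forall₂_congr fun X Y => isTripleDerivation_iff_commutator_eq T (T X Y),
    forall₂_congr fun X Y => isTripleDerivation_iff_commutator_flip_eq T (T X Y), ?_⟩
  simp only [flip_apply_bracket_eq_iff T lt1]
  exact ⟨fun h X U V W Y => h X Y U V W, fun h X Y U V W => h X U V W Y⟩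

theorem derivation_operator_forms_equivalent
    (K : Type*) [CommRing K] [Invertible (2 : K)]
    (𝔪 : Type*) [AddCommGroup 𝔪] [Module K 𝔪]
    (T : 𝔪 →ₗ[K] 𝔪 →ₗ[K] 𝔪 →ₗ[K] 𝔪)
    (lt1 : ∀ X Y Z, T X Y Z = - T Y X Z)
    (lt2 : ∀ X Y Z, T X Y Z + T Y Z X + T Z X Y = 0) :
    -- (LT3) ↔ (LT3a)
    ((∀ X Y U V W, T X Y (T U V W) =
        T (T X Y U) V W + T U (T X Y V) W + T U V (T X Y W)) ↔
      (∀ X Y U V, T X Y * T U V - T U V * T X Y =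
        T (T X Y U) V + T U (T X Y V))) ∧
    -- (LT3) ↔ (LT3b)
    ((∀ X Y U V W, T X Y (T U V W) =
        T (T X Y U) V W + T U (T X Y V) W + T U V (T X Y W)) ↔
      (∀ X Y U W, T X Y * (T U).flip W - (T U).flip W * T X Y =
        (T (T X Y U)).flip W + (T U).flip (T X Y W))) ∧
    -- (LT3) ↔ (LT3c)
    ((∀ X Y U V W, T X Y (T U V W) =
        T (T X Y U) V W + T U (T X Y V) W + T U V (T X Y W)) ↔
      (∀ X U V W, (T X).flip (T U V W) =
        -((T V).flip W * (T X).flip U) + (T U).flip W * (T X).flip V +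
          T U V * (T X).flip W)) :=
  derivation_operator_forms_equivalent_general K 𝔪 T lt1
end

section
/- Let K be a commutative ring in which 2 is invertible, let (𝔪, [·,·,·]) be a Lie triple system over K with R(X,Y)Z := [X,Y,Z], let V be a K-module, and let r, m : 𝔪×𝔪 → End_K(V) be bilinear maps. Define a trilinear bracket on the K-module 𝔪 ⊕ V by [X⊕u, Y⊕v, Z⊕w] := [X,Y,Z] ⊕ (r(X,Y)w + m(X,Z)v - m(Y,Z)u). Then 𝔪 ⊕ V with this bracket is a Lie triple system (satisfies (LT1), (LT2), (LT3)) if and only if r and m satisfy: (R1) r(X,Y) = -r(Y,X); (R2) m(X,Z) - m(Z,X) = r(X,Z); (R3) r(R(X,Y)U, V) + r(U, R(X,Y)V) = [r(X,Y), r(U,V)] and m(R(X,Y)U, V) + m(U, R(X,Y)V) = [r(X,Y), m(U,V)]; (R4) m(X, R(U,V)W) - r(U,V)∘m(X,W) = m(U,W)∘m(X,V) - m(V,W)∘m(X,U). -/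
/-! The first component of the bracket on `𝔪 ⊕ V` is the bracket of `𝔪`, so only the
`V`-component matters, and it is affine in the `V`-arguments. Evaluating each of (LT1)–(LT3) with a
single argument in `V` and the rest in `𝔪` isolates exactly one of (R1)–(R4); conversely, the
`V`-component of each of (LT1)–(LT3) is a sum of such instances. -/

structure LieTripleAxioms {M : Type*} [AddCommGroup M] (B : M → M → M → M) : Prop where
  antisymm : ∀ a b c, B a b c = -B b a c
  cyclic : ∀ a b c, B a b c + B b c a + B c a b = 0
  derivation : ∀ a b u v w, B a b (B u v w) = B (B a b u) v w + B u (B a b v) w + B u v (B a b w)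

namespace SplitNullExtension

variable {K 𝔪 V : Type*} [CommRing K] [AddCommGroup 𝔪] [Module K 𝔪] [AddCommGroup V] [Module K V]
  (T : 𝔪 →ₗ[K] 𝔪 →ₗ[K] 𝔪 →ₗ[K] 𝔪) (r m : 𝔪 →ₗ[K] 𝔪 →ₗ[K] Module.End K V)

/-- The conditions (R1)–(R4) on a pair `(r, m)`, i.e. `(V, r, m)` is a representation of `(𝔪, T)`. -/
structure IsRepresentation : Prop where
  r_antisymm : ∀ X Y, r X Y = -r Y X
  m_sub_m_swap : ∀ X Z, m X Z - m Z X = r X Z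
  r_derivation : ∀ X Y U W, r (T X Y U) W + r U (T X Y W) = r X Y * r U W - r U W * r X Y
  m_derivation : ∀ X Y U W, m (T X Y U) W + m U (T X Y W) = r X Y * m U W - m U W * r X Y
  m_compat : ∀ X U W Z, m X (T U W Z) - r U W * m X Z = m U Z * m X W - m W Z * m X U

def bracket (a b c : 𝔪 × V) : 𝔪 × V :=
  (T a.1 b.1 c.1, r a.1 b.1 c.2 + m a.1 c.1 b.2 - m b.1 c.1 a.2)

@[simp] lemma bracket_fst (a b c : 𝔪 × V) : (bracket T r m a b c).1 = T a.1 b.1 c.1 := rfl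

@[simp] lemma bracket_snd (a b c : 𝔪 × V) :
    (bracket T r m a b c).2 = r a.1 b.1 c.2 + m a.1 c.1 b.2 - m b.1 c.1 a.2 := rfl

variable {T r m}

theorem isRepresentation_of_lieTripleAxioms_bracket (h : LieTripleAxioms (bracket T r m)) :
    IsRepresentation T r m := by
  have r_antisymm : ∀ X Y, r X Y = -r Y X := fun X Y => by
    ext w
    simpa using congrArg Prod.snd (h.antisymm (X, 0) (Y, 0) (0, w))
  refine ⟨r_antisymm, fun X Z => ?_, fun X Y U W => ?_, fun X Y U W => ?_, fun X U W Z => ?_⟩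
  · ext v
    have := congrArg Prod.snd (h.cyclic (X, 0) (0, v) (Z, 0))
    simp only [bracket_snd, r_antisymm Z X, map_zero, LinearMap.zero_apply, LinearMap.neg_apply,
      add_zero, zero_add, sub_zero, Prod.snd_add, Prod.snd_zero] at this
    simp only [LinearMap.sub_apply]
    linear_combination (norm := abel) this
  · ext w
    have := congrArg Prod.snd (h.derivation (X, 0) (Y, 0) (U, 0) (W, 0) (0, w))
    simp only [bracket_snd, bracket_fst, map_zero, add_zero, sub_zero, Prod.snd_add] at this
    simp only [LinearMap.add_apply, LinearMap.sub_apply, Module.End.mul_apply]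
    linear_combination (norm := abel) -this
  · ext v
    have := congrArg Prod.snd (h.derivation (X, 0) (Y, 0) (U, 0) (0, v) (W, 0))
    simp only [bracket_snd, bracket_fst, map_zero, LinearMap.zero_apply, add_zero, zero_add,
      sub_zero, Prod.snd_add] at this
    simp only [LinearMap.add_apply, LinearMap.sub_apply, Module.End.mul_apply]
    linear_combination (norm := abel) -this
  · ext v
    have := congrArg Prod.snd (h.derivation (X, 0) (0, v) (U, 0) (W, 0) (Z, 0))
    simp only [bracket_snd, bracket_fst, map_zero, LinearMap.zero_apply, add_zero, zero_add,
      sub_zero, zero_sub, Prod.snd_add] at this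
    simp only [LinearMap.sub_apply, Module.End.mul_apply]
    linear_combination (norm := abel) this

variable (lts : LieTripleAxioms (fun X Y Z => T X Y Z)) (hr : IsRepresentation T r m)
include lts hr

theorem bracket_antisymm (a b c : 𝔪 × V) : bracket T r m a b c = -bracket T r m b a c := by
  refine Prod.ext (lts.antisymm a.1 b.1 c.1) ?_
  simp only [bracket_snd, Prod.snd_neg, hr.r_antisymm a.1 b.1, LinearMap.neg_apply]
  abel

theorem bracket_cyclic (a b c : 𝔪 × V) :
    bracket T r m a b c + bracket T r m b c a + bracket T r m c a b = 0 := by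
  have m_swap : ∀ X Y, m Y X = m X Y - r X Y := fun X Y => by
    rw [← hr.m_sub_m_swap X Y, sub_sub_cancel]
  refine Prod.ext (lts.cyclic a.1 b.1 c.1) ?_
  simp only [Prod.snd_add, Prod.snd_zero, bracket_snd, m_swap a.1 b.1, m_swap a.1 c.1,
    m_swap b.1 c.1, hr.r_antisymm c.1 a.1, LinearMap.sub_apply, LinearMap.neg_apply]
  abel

theorem bracket_derivation (a b u v w : 𝔪 × V) :
    bracket T r m a b (bracket T r m u v w) = bracket T r m (bracket T r m a b u) v w +
      bracket T r m u (bracket T r m a b v) w + bracket T r m u v (bracket T r m a b w) := by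
  obtain ⟨X, x⟩ := a; obtain ⟨Y, y⟩ := b; obtain ⟨U, p⟩ := u; obtain ⟨W, q⟩ := v; obtain ⟨Z, s⟩ := w
  refine Prod.ext (lts.derivation X Y U W Z) ?_
  simp only [Prod.snd_add, bracket_snd, bracket_fst]
  rw [eq_sub_of_add_eq (hr.r_derivation X Y U W), eq_sub_of_add_eq (hr.m_derivation X Y U Z),
    eq_sub_of_add_eq (hr.m_derivation X Y W Z), eq_add_of_sub_eq (hr.m_compat X U W Z),
    eq_add_of_sub_eq (hr.m_compat Y U W Z)]
  simp only [LinearMap.sub_apply, LinearMap.add_apply, Module.End.mul_apply, map_add, map_sub]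
  abel

omit hr in
theorem lieTripleAxioms_bracket_iff :
    LieTripleAxioms (bracket T r m) ↔ IsRepresentation T r m :=
  ⟨isRepresentation_of_lieTripleAxioms_bracket, fun hr =>
    ⟨bracket_antisymm lts hr, bracket_cyclic lts hr, bracket_derivation lts hr⟩⟩

end SplitNullExtension

open SplitNullExtension in
theorem split_null_extension_lts_iff_representation_general
    (K : Type*) [CommRing K]
    (𝔪 : Type*) [AddCommGroup 𝔪] [Module K 𝔪]
    (V : Type*) [AddCommGroup V] [Module K V]
    (T : 𝔪 →ₗ[K] 𝔪 →ₗ[K] 𝔪 →ₗ[K] 𝔪)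
    (lt1 : ∀ X Y Z, T X Y Z = - T Y X Z)
    (lt2 : ∀ X Y Z, T X Y Z + T Y Z X + T Z X Y = 0)
    (lt3 : ∀ X Y U W Z, T X Y (T U W Z) =
      T (T X Y U) W Z + T U (T X Y W) Z + T U W (T X Y Z))
    (r m : 𝔪 →ₗ[K] 𝔪 →ₗ[K] Module.End K V) :
    (let B : 𝔪 × V → 𝔪 × V → 𝔪 × V → 𝔪 × V := fun a b c =>
      (T a.1 b.1 c.1, r a.1 b.1 c.2 + m a.1 c.1 b.2 - m b.1 c.1 a.2)
     -- (LT1), (LT2), (LT3) on 𝔪 ⊕ V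
     (∀ a b c, B a b c = - B b a c) ∧
     (∀ a b c, B a b c + B b c a + B c a b = 0) ∧
     (∀ a b u v w, B a b (B u v w) =
       B (B a b u) v w + B u (B a b v) w + B u v (B a b w)))
    ↔
    -- (R1)
    ((∀ X Y, r X Y = - r Y X) ∧
     -- (R2)
     (∀ X Z, m X Z - m Z X = r X Z) ∧
     -- (R3), first identity
     (∀ X Y U W, r (T X Y U) W + r U (T X Y W) =
        r X Y * r U W - r U W * r X Y) ∧
     -- (R3), second identity
     (∀ X Y U W, m (T X Y U) W + m U (T X Y W) =
        r X Y * m U W - m U W * r X Y) ∧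
     -- (R4)
     (∀ X U W Z, m X (T U W Z) - r U W * m X Z =
        m U Z * m X W - m W Z * m X U)) := by
  have key := lieTripleAxioms_bracket_iff (r := r) (m := m) ⟨lt1, lt2, lt3⟩
  constructor
  · rintro ⟨antisymm, cyclic, derivation⟩
    obtain ⟨R1, R2, R3r, R3m, R4⟩ := key.1 ⟨antisymm, cyclic, derivation⟩
    exact ⟨R1, R2, R3r, R3m, R4⟩
  · rintro ⟨R1, R2, R3r, R3m, R4⟩
    obtain ⟨antisymm, cyclic, derivation⟩ := key.2 ⟨R1, R2, R3r, R3m, R4⟩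
    exact ⟨antisymm, cyclic, derivation⟩

theorem split_null_extension_lts_iff_representation
    (K : Type*) [CommRing K] [Invertible (2 : K)]
    (𝔪 : Type*) [AddCommGroup 𝔪] [Module K 𝔪]
    (V : Type*) [AddCommGroup V] [Module K V]
    (T : 𝔪 →ₗ[K] 𝔪 →ₗ[K] 𝔪 →ₗ[K] 𝔪)
    (lt1 : ∀ X Y Z, T X Y Z = - T Y X Z)
    (lt2 : ∀ X Y Z, T X Y Z + T Y Z X + T Z X Y = 0)
    (lt3 : ∀ X Y U W Z, T X Y (T U W Z) =
      T (T X Y U) W Z + T U (T X Y W) Z + T U W (T X Y Z))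
    (r m : 𝔪 →ₗ[K] 𝔪 →ₗ[K] Module.End K V) :
    (let B : 𝔪 × V → 𝔪 × V → 𝔪 × V → 𝔪 × V := fun a b c =>
      (T a.1 b.1 c.1, r a.1 b.1 c.2 + m a.1 c.1 b.2 - m b.1 c.1 a.2)
     -- (LT1), (LT2), (LT3) on 𝔪 ⊕ V
     (∀ a b c, B a b c = - B b a c) ∧
     (∀ a b c, B a b c + B b c a + B c a b = 0) ∧
     (∀ a b u v w, B a b (B u v w) =
       B (B a b u) v w + B u (B a b v) w + B u v (B a b w)))
    ↔
    -- (R1)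
    ((∀ X Y, r X Y = - r Y X) ∧
     -- (R2)
     (∀ X Z, m X Z - m Z X = r X Z) ∧
     -- (R3), first identity
     (∀ X Y U W, r (T X Y U) W + r U (T X Y W) =
        r X Y * r U W - r U W * r X Y) ∧
     -- (R3), second identity
     (∀ X Y U W, m (T X Y U) W + m U (T X Y W) =
        r X Y * m U W - m U W * r X Y) ∧
     -- (R4)
     (∀ X U W Z, m X (T U W Z) - r U W * m X Z =
        m U Z * m X W - m W Z * m X U)) :=
  split_null_extension_lts_iff_representation_general K 𝔪 V T lt1 lt2 lt3 r m
end

section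
/- Let K be a commutative ring in which 2 is invertible, 𝔤 a Lie algebra over K with an involutive Lie algebra automorphism σ, and 𝔪 := {X ∈ 𝔤 : σX = -X}, an Lts with bracket [X,Y,Z] := [[X,Y],Z]. Let W be a 𝔤-module with action ρ : 𝔤 → End_K(W), and let τ : W → W be a K-linear involution satisfying τ(ρ(X)w) = ρ(σX)(τw) for all X ∈ 𝔤, w ∈ W. Set W⁻ := {w ∈ W : τw = -w}. Then for all X, Y, Z ∈ 𝔪 the operators ρ([X,Y]) and ρ(Z)∘ρ(X) map W⁻ into itself, and the bilinear maps r(X,Y) := ρ([X,Y])|_{W⁻} and m(X,Z) := -(ρ(Z)∘ρ(X))|_{W⁻} satisfy the representation axioms (R1) r(X,Y) = -r(Y,X); (R2) m(X,Z) - m(Z,X) = r(X,Z); (R3) r([X,Y,U], V) + r(U, [X,Y,V]) = [r(X,Y), r(U,V)] and m([X,Y,U], V) + m(U, [X,Y,V]) = [r(X,Y), m(U,V)]; (R4) m(X, [U,V,W]) - r(U,V)∘m(X,W) = m(U,W)∘m(X,V) - m(V,W)∘m(X,U). In other words, W⁻ is a module over the Lie triple system 𝔪. -/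
/-! For any representation ρ of 𝔤, the operators r and m satisfy (R1)–(R4) as identities of
endomorphisms of all of W: they follow from the commutator formula for ρ and the Jacobi identity.
The involutions enter only through invariance: for X ∈ 𝔪 the operator ρ(X) anticommutes with τ,
hence swaps the ±1-eigenspaces of τ, so ρ(Z)∘ρ(X) preserves W⁻; and [X,Y] is σ-fixed, so ρ([X,Y])
commutes with τ and preserves W⁻ too. -/

section Representation

variable {K 𝔤 W : Type*} [CommRing K] [LieRing 𝔤] [LieAlgebra K 𝔤] [AddCommGroup W] [Module K W]

def ltsR (ρ : 𝔤 →ₗ[K] Module.End K W) (X Y : 𝔤) : Module.End K W := ρ ⁅X, Y⁆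

def ltsM (ρ : 𝔤 →ₗ[K] Module.End K W) (X Z : 𝔤) : Module.End K W := -(ρ Z * ρ X)

theorem ltsR_swap (ρ : 𝔤 →ₗ[K] Module.End K W) (X Y : 𝔤) : ltsR ρ X Y = -ltsR ρ Y X := by
  rw [ltsR, ltsR, ← lie_skew X Y, map_neg]

variable {ρ : 𝔤 →ₗ[K] Module.End K W}

theorem ltsM_sub_ltsM_swap (hρ : ∀ X Y, ρ ⁅X, Y⁆ = ρ X * ρ Y - ρ Y * ρ X) (X Z : 𝔤) :
    ltsM ρ X Z - ltsM ρ Z X = ltsR ρ X Z := by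
  rw [ltsM, ltsM, ltsR, hρ]
  noncomm_ring

theorem ltsR_lie_add_ltsR_lie (hρ : ∀ X Y, ρ ⁅X, Y⁆ = ρ X * ρ Y - ρ Y * ρ X) (A U V : 𝔤) :
    ltsR ρ ⁅A, U⁆ V + ltsR ρ U ⁅A, V⁆ = ρ A * ltsR ρ U V - ltsR ρ U V * ρ A := by
  rw [ltsR, ltsR, ltsR, ← map_add, ← leibniz_lie, hρ]

theorem ltsM_lie_add_ltsM_lie (hρ : ∀ X Y, ρ ⁅X, Y⁆ = ρ X * ρ Y - ρ Y * ρ X) (A U V : 𝔤) :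
    ltsM ρ ⁅A, U⁆ V + ltsM ρ U ⁅A, V⁆ = ρ A * ltsM ρ U V - ltsM ρ U V * ρ A := by
  rw [ltsM, ltsM, ltsM, hρ A U, hρ A V]
  noncomm_ring

theorem ltsM_lie_lie_sub (hρ : ∀ X Y, ρ ⁅X, Y⁆ = ρ X * ρ Y - ρ Y * ρ X) (X U V Z : 𝔤) :
    ltsM ρ X ⁅⁅U, V⁆, Z⁆ - ltsR ρ U V * ltsM ρ X Z =
      ltsM ρ U Z * ltsM ρ X V - ltsM ρ V Z * ltsM ρ X U := by
  simp only [ltsM, ltsR]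
  rw [hρ ⁅U, V⁆ Z, hρ U V]
  noncomm_ring

end Representation

section Involution

variable {K 𝔤 W : Type*} [CommRing K] [LieRing 𝔤] [LieAlgebra K 𝔤] [AddCommGroup W] [Module K W]
  {σ : 𝔤 →ₗ[K] 𝔤} {ρ : 𝔤 →ₗ[K] Module.End K W} {τ : W →ₗ[K] W}

theorem lie_fixed_of_anti (hbr : ∀ X Y, σ ⁅X, Y⁆ = ⁅σ X, σ Y⁆) {X Y : 𝔤}
    (hX : σ X = -X) (hY : σ Y = -Y) : σ ⁅X, Y⁆ = ⁅X, Y⁆ := by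
  rw [hbr, hX, hY, neg_lie, lie_neg, neg_neg]

theorem apply_rho_of_anti (hτρ : ∀ X w, τ (ρ X w) = ρ (σ X) (τ w)) {X : 𝔤}
    (hX : σ X = -X) (w : W) : τ (ρ X w) = -ρ X (τ w) := by
  rw [hτρ, hX, map_neg, LinearMap.neg_apply]

theorem apply_rho_rho_of_anti (hτρ : ∀ X w, τ (ρ X w) = ρ (σ X) (τ w)) {X Z : 𝔤}
    (hX : σ X = -X) (hZ : σ Z = -Z) {w : W} (hw : τ w = -w) :
    τ (ρ Z (ρ X w)) = -ρ Z (ρ X w) := by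
  rw [apply_rho_of_anti hτρ hZ, apply_rho_of_anti hτρ hX, hw, map_neg, map_neg, neg_neg, map_neg]

theorem apply_rho_lie_of_anti (hbr : ∀ X Y, σ ⁅X, Y⁆ = ⁅σ X, σ Y⁆)
    (hτρ : ∀ X w, τ (ρ X w) = ρ (σ X) (τ w)) {X Y : 𝔤}
    (hX : σ X = -X) (hY : σ Y = -Y) {w : W} (hw : τ w = -w) :
    τ (ρ ⁅X, Y⁆ w) = -ρ ⁅X, Y⁆ w := by
  rw [hτρ, lie_fixed_of_anti hbr hX hY, hw, map_neg]

end Involution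

theorem module_with_involution_gives_lts_module_general
    (K : Type*) [CommRing K]
    (𝔤 : Type*) [LieRing 𝔤] [LieAlgebra K 𝔤]
    (σ : 𝔤 →ₗ[K] 𝔤)
    (hbr : ∀ X Y, σ ⁅X, Y⁆ = ⁅σ X, σ Y⁆)
    (W : Type*) [AddCommGroup W] [Module K W]
    (ρ : 𝔤 →ₗ[K] Module.End K W)
    (hρ : ∀ X Y, ρ ⁅X, Y⁆ = ρ X * ρ Y - ρ Y * ρ X)
    (τ : W →ₗ[K] W)
    (hτρ : ∀ X w, τ (ρ X w) = ρ (σ X) (τ w)) :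
    -- invariance of W⁻ under ρ([X,Y]) and ρ(Z)∘ρ(X)
    (∀ X Y : 𝔤, σ X = -X → σ Y = -Y → ∀ w, τ w = -w →
      τ (ρ ⁅X, Y⁆ w) = -(ρ ⁅X, Y⁆ w)) ∧
    (∀ X Z : 𝔤, σ X = -X → σ Z = -Z → ∀ w, τ w = -w →
      τ (ρ Z (ρ X w)) = -(ρ Z (ρ X w))) ∧
    -- (R1)-(R4) for r(X,Y) := ρ([X,Y]), m(X,Z) := -ρ(Z)∘ρ(X) on W⁻
    (let r : 𝔤 → 𝔤 → Module.End K W := fun X Y => ρ ⁅X, Y⁆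
     let m : 𝔤 → 𝔤 → Module.End K W := fun X Z => -(ρ Z * ρ X)
     -- (R1)
     (∀ X Y : 𝔤, σ X = -X → σ Y = -Y → ∀ w, τ w = -w →
       r X Y w = -(r Y X w)) ∧
     -- (R2)
     (∀ X Z : 𝔤, σ X = -X → σ Z = -Z → ∀ w, τ w = -w →
       m X Z w - m Z X w = r X Z w) ∧
     -- (R3), first identity
     (∀ X Y U V : 𝔤, σ X = -X → σ Y = -Y → σ U = -U → σ V = -V →
       ∀ w, τ w = -w →
       r ⁅⁅X, Y⁆, U⁆ V w + r U ⁅⁅X, Y⁆, V⁆ w =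
         (r X Y * r U V - r U V * r X Y) w) ∧
     -- (R3), second identity
     (∀ X Y U V : 𝔤, σ X = -X → σ Y = -Y → σ U = -U → σ V = -V →
       ∀ w, τ w = -w →
       m ⁅⁅X, Y⁆, U⁆ V w + m U ⁅⁅X, Y⁆, V⁆ w =
         (r X Y * m U V - m U V * r X Y) w) ∧
     -- (R4)
     (∀ X U V Z : 𝔤, σ X = -X → σ U = -U → σ V = -V → σ Z = -Z →
       ∀ w, τ w = -w →
       m X ⁅⁅U, V⁆, Z⁆ w - (r U V * m X Z) w =
         (m U Z * m X V) w - (m V Z * m X U) w)) := by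
  refine ⟨fun X Y hX hY w hw => apply_rho_lie_of_anti hbr hτρ hX hY hw,
    fun X Z hX hZ w hw => apply_rho_rho_of_anti hτρ hX hZ hw,
    fun X Y _ _ w _ => ?_, fun X Z _ _ w _ => ?_, fun X Y U V _ _ _ _ w _ => ?_,
    fun X Y U V _ _ _ _ w _ => ?_, fun X U V Z _ _ _ _ w _ => ?_⟩
  · exact LinearMap.congr_fun (ltsR_swap ρ X Y) w
  · exact LinearMap.congr_fun (ltsM_sub_ltsM_swap hρ X Z) w
  · exact LinearMap.congr_fun (ltsR_lie_add_ltsR_lie hρ ⁅X, Y⁆ U V) w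
  · exact LinearMap.congr_fun (ltsM_lie_add_ltsM_lie hρ ⁅X, Y⁆ U V) w
  · exact LinearMap.congr_fun (ltsM_lie_lie_sub hρ X U V Z) w

theorem module_with_involution_gives_lts_module
    (K : Type*) [CommRing K] [Invertible (2 : K)]
    (𝔤 : Type*) [LieRing 𝔤] [LieAlgebra K 𝔤]
    (σ : 𝔤 →ₗ[K] 𝔤)
    (hinv : ∀ X, σ (σ X) = X)
    (hbr : ∀ X Y, σ ⁅X, Y⁆ = ⁅σ X, σ Y⁆)
    (W : Type*) [AddCommGroup W] [Module K W]
    (ρ : 𝔤 →ₗ[K] Module.End K W)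
    (hρ : ∀ X Y, ρ ⁅X, Y⁆ = ρ X * ρ Y - ρ Y * ρ X)
    (τ : W →ₗ[K] W)
    (hτ : ∀ w, τ (τ w) = w)
    (hτρ : ∀ X w, τ (ρ X w) = ρ (σ X) (τ w)) :
    -- invariance of W⁻ under ρ([X,Y]) and ρ(Z)∘ρ(X)
    (∀ X Y : 𝔤, σ X = -X → σ Y = -Y → ∀ w, τ w = -w →
      τ (ρ ⁅X, Y⁆ w) = -(ρ ⁅X, Y⁆ w)) ∧
    (∀ X Z : 𝔤, σ X = -X → σ Z = -Z → ∀ w, τ w = -w →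
      τ (ρ Z (ρ X w)) = -(ρ Z (ρ X w))) ∧
    -- (R1)-(R4) for r(X,Y) := ρ([X,Y]), m(X,Z) := -ρ(Z)∘ρ(X) on W⁻
    (let r : 𝔤 → 𝔤 → Module.End K W := fun X Y => ρ ⁅X, Y⁆
     let m : 𝔤 → 𝔤 → Module.End K W := fun X Z => -(ρ Z * ρ X)
     -- (R1)
     (∀ X Y : 𝔤, σ X = -X → σ Y = -Y → ∀ w, τ w = -w →
       r X Y w = -(r Y X w)) ∧
     -- (R2)
     (∀ X Z : 𝔤, σ X = -X → σ Z = -Z → ∀ w, τ w = -w →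
       m X Z w - m Z X w = r X Z w) ∧
     -- (R3), first identity
     (∀ X Y U V : 𝔤, σ X = -X → σ Y = -Y → σ U = -U → σ V = -V →
       ∀ w, τ w = -w →
       r ⁅⁅X, Y⁆, U⁆ V w + r U ⁅⁅X, Y⁆, V⁆ w =
         (r X Y * r U V - r U V * r X Y) w) ∧
     -- (R3), second identity
     (∀ X Y U V : 𝔤, σ X = -X → σ Y = -Y → σ U = -U → σ V = -V →
       ∀ w, τ w = -w →
       m ⁅⁅X, Y⁆, U⁆ V w + m U ⁅⁅X, Y⁆, V⁆ w =
         (r X Y * m U V - m U V * r X Y) w) ∧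
     -- (R4)
     (∀ X U V Z : 𝔤, σ X = -X → σ U = -U → σ V = -V → σ Z = -Z →
       ∀ w, τ w = -w →
       m X ⁅⁅U, V⁆, Z⁆ w - (r U V * m X Z) w =
         (m U Z * m X V) w - (m V Z * m X U) w)) :=
  module_with_involution_gives_lts_module_general K 𝔤 σ hbr W ρ hρ τ hτρ
end

section
/- Let K be a commutative ring in which 2 is invertible, (𝔪, [·,·,·]) a Lie triple system over K, and (V, r, m) a general representation of 𝔪 (bilinear maps r, m : 𝔪×𝔪 → End_K(V) satisfying (R1)–(R4)). For A ∈ End_K(V) let A* ∈ End_K(V*) denote the dual operator on V* = Hom_K(V, K), A*(φ) = φ∘A. Then the bilinear maps r*(X,Y) := r(Y,X)* = -r(X,Y)* and m*(X,Y) := m(Y,X)* define a general representation of 𝔪 on V*, i.e. satisfy (R1)–(R4). -/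
/-! Transposition `A ↦ A*` is `K`-linear and reverses products. Exchanging the arguments of `r`
and `m` compensates for the reversal: (R1)–(R3) for the new pair are (R1)–(R3) for the old one
read backwards, and (R4) for it amounts to the identity obtained by subtracting (R4) from the
second identity of (R3). -/

/-- A general representation of a Lie triple system (𝔪, T) on a K-module V:
a pair of bilinear maps r, m : 𝔪 × 𝔪 → End_K(V) satisfying (R1)-(R4). -/
def IsLTSRep (K : Type*) [CommRing K]
    (𝔪 : Type*) [AddCommGroup 𝔪] [Module K 𝔪]
    (V : Type*) [AddCommGroup V] [Module K V]
    (T : 𝔪 →ₗ[K] 𝔪 →ₗ[K] 𝔪 →ₗ[K] 𝔪)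
    (r m : 𝔪 → 𝔪 → Module.End K V) : Prop :=
  -- bilinearity of r
  (∀ X X' Y, r (X + X') Y = r X Y + r X' Y) ∧
  (∀ (c : K) (X Y : 𝔪), r (c • X) Y = c • r X Y) ∧
  (∀ X Y Y', r X (Y + Y') = r X Y + r X Y') ∧
  (∀ (c : K) (X Y : 𝔪), r X (c • Y) = c • r X Y) ∧
  -- bilinearity of m
  (∀ X X' Y, m (X + X') Y = m X Y + m X' Y) ∧
  (∀ (c : K) (X Y : 𝔪), m (c • X) Y = c • m X Y) ∧
  (∀ X Y Y', m X (Y + Y') = m X Y + m X Y') ∧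
  (∀ (c : K) (X Y : 𝔪), m X (c • Y) = c • m X Y) ∧
  -- (R1)
  (∀ X Y, r X Y = - r Y X) ∧
  -- (R2)
  (∀ X Z, m X Z - m Z X = r X Z) ∧
  -- (R3), first identity
  (∀ X Y U W, r (T X Y U) W + r U (T X Y W) =
    r X Y * r U W - r U W * r X Y) ∧
  -- (R3), second identity
  (∀ X Y U W, m (T X Y U) W + m U (T X Y W) =
    r X Y * m U W - m U W * r X Y) ∧
  -- (R4)
  (∀ X U V W, m X (T U V W) - r U V * m X W =
    m U W * m X V - m V W * m X U)

namespace IsLTSRep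

variable {K : Type*} [CommRing K] {𝔪 : Type*} [AddCommGroup 𝔪] [Module K 𝔪]
  {V : Type*} [AddCommGroup V] [Module K V] {T : 𝔪 →ₗ[K] 𝔪 →ₗ[K] 𝔪 →ₗ[K] 𝔪}
  {r m : 𝔪 → 𝔪 → Module.End K V}

theorem r_T_add_r_T_flip (h : IsLTSRep K 𝔪 V T r m) (X Y U W : 𝔪) :
    r W (T X Y U) + r (T X Y W) U = r U W * r X Y - r X Y * r U W := by
  obtain ⟨-, -, -, -, -, -, -, -, hR1, -, hR3a, -, -⟩ := h
  rw [hR1 W, hR1 (T X Y W), ← neg_add, hR3a, neg_sub]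

theorem m_T_add_m_mul_r (h : IsLTSRep K 𝔪 V T r m) (U V W X : 𝔪) :
    m (T U V W) X + m W X * r U V = m V X * m W U - m U X * m W V := by
  obtain ⟨-, -, -, -, -, -, -, -, -, -, -, hR3b, hR4⟩ := h
  calc m (T U V W) X + m W X * r U V
      = (m (T U V W) X + m W (T U V X)) - (m W (T U V X) - r U V * m W X)
          - (r U V * m W X - m W X * r U V) := by abel
    _ = m V X * m W U - m U X * m W V := by rw [hR3b, hR4]; abel

theorem comp_flip_of_antihom {W : Type*} [AddCommGroup W] [Module K W]
    (h : IsLTSRep K 𝔪 V T r m) (f : Module.End K V →ₗ[K] Module.End K W)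
    (hf : ∀ A B, f (A * B) = f B * f A) :
    IsLTSRep K 𝔪 W T (fun X Y => f (r Y X)) (fun X Y => f (m Y X)) := by
  have hr_flip := h.r_T_add_r_T_flip
  have hm_T := h.m_T_add_m_mul_r
  obtain ⟨ra1, ra2, ra3, ra4, ma1, ma2, ma3, ma4, hR1, hR2, -, hR3b, -⟩ := h
  refine ⟨fun X X' Y => ?_, fun c X Y => ?_, fun X Y Y' => ?_, fun c X Y => ?_,
    fun X X' Y => ?_, fun c X Y => ?_, fun X Y Y' => ?_, fun c X Y => ?_,
    fun X Y => ?_, fun X Z => ?_, fun X Y U W => ?_, fun X Y U W => ?_,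
    fun X U V W => ?_⟩ <;> dsimp only
  · rw [ra3, map_add]
  · rw [ra4, map_smul]
  · rw [ra1, map_add]
  · rw [ra2, map_smul]
  · rw [ma3, map_add]
  · rw [ma4, map_smul]
  · rw [ma1, map_add]
  · rw [ma2, map_smul]
  · rw [hR1 Y X, map_neg]
  · rw [← map_sub, hR2]
  · rw [← map_add, hr_flip, map_sub, hf, hf, hR1 Y X, hR1 W U, map_neg, map_neg]
    noncomm_ring
  · rw [← map_add, add_comm, hR3b, map_sub, hf, hf, hR1 Y X, map_neg]
    noncomm_ring
  · rw [← hf, ← hf, ← hf, ← map_sub, ← map_sub, ← hm_T, hR1 V U]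
    noncomm_ring

end IsLTSRep

theorem dual_representation_general
    (K : Type*) [CommRing K]
    (𝔪 : Type*) [AddCommGroup 𝔪] [Module K 𝔪]
    (V : Type*) [AddCommGroup V] [Module K V]
    (T : 𝔪 →ₗ[K] 𝔪 →ₗ[K] 𝔪 →ₗ[K] 𝔪)
    (r m : 𝔪 → 𝔪 → Module.End K V)
    (h : IsLTSRep K 𝔪 V T r m) :
    IsLTSRep K 𝔪 (Module.Dual K V) T
      (fun X Y => (r Y X).dualMap)
      (fun X Y => (m Y X).dualMap) :=
  h.comp_flip_of_antihom Module.Dual.transpose fun A B => Module.Dual.transpose_comp A B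

theorem dual_representation
    (K : Type*) [CommRing K] [Invertible (2 : K)]
    (𝔪 : Type*) [AddCommGroup 𝔪] [Module K 𝔪]
    (V : Type*) [AddCommGroup V] [Module K V]
    (T : 𝔪 →ₗ[K] 𝔪 →ₗ[K] 𝔪 →ₗ[K] 𝔪)
    (lt1 : ∀ X Y Z, T X Y Z = - T Y X Z)
    (lt2 : ∀ X Y Z, T X Y Z + T Y Z X + T Z X Y = 0)
    (lt3 : ∀ X Y U V' W', T X Y (T U V' W') =
      T (T X Y U) V' W' + T U (T X Y V') W' + T U V' (T X Y W'))
    (r m : 𝔪 → 𝔪 → Module.End K V)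
    (h : IsLTSRep K 𝔪 V T r m) :
    IsLTSRep K 𝔪 (Module.Dual K V) T
      (fun X Y => (r Y X).dualMap)
      (fun X Y => (m Y X).dualMap) :=
  dual_representation_general K 𝔪 V T r m h
end

section
/- Let K be a commutative ring in which 2 is invertible, (𝔪, [·,·,·]) a Lie triple system over K, and T : 𝔪×𝔪×𝔪 → 𝔪 a Jordan extension of 𝔪, i.e. a Jordan triple system on 𝔪 (satisfying (JT1) and (JT2)) such that T(X,Y,Z) - T(Y,X,Z) = [X,Y,Z] for all X,Y,Z. Then the K-module 𝔪 ⊕ 𝔪 with the trilinear bracket [(X,u),(Y,v),(Z,w)] := ([X,Y,Z], [X,Y,w] - T(X,v,Z) - T(v,X,Z) + T(Y,u,Z) + T(u,Y,Z)) is a Lie triple system (satisfies (LT1), (LT2), (LT3)). Equivalently, the bilinear maps r̃(X,Y) := [X,Y,·] and m̃(X,Z) := -(T(X,·,Z) + T(·,X,Z)) into End_K(𝔪) form a general representation of 𝔪 on the K-module 𝔪, i.e. satisfy (R1)–(R4); its r-component r̃ coincides with the r-component R(X,Y) = [X,Y,·] of the regular representation. -/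
/-!
Any general representation `(r, m)` of a Lie triple system `𝔪` on `E` makes `𝔪 ⊕ E` a Lie triple
system under `[(X,u),(Y,v),(Z,w)] = ([X,Y,Z], r(X,Y)w + m(X,Z)v - m(Y,Z)u)`: comparing the
`E`-components of (LT1)–(LT3) coefficient by coefficient gives exactly (R1)–(R4). So it suffices to
check (R1)–(R4) for `r̃ = R` and `m̃(X,Z) = -(T(X,·,Z) + T(·,X,Z))`. Since
`[X,Y,·] = T(X,Y,·) - T(Y,X,·)`, (JT2) minus its copy with `X, Y` swapped says that `R(X,Y)` is a
derivation of `T`, which gives the second identity of (R3); (R4) is a sum of four instances of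
(JT2), and (R2) follows from (JT1).
-/

structure IsLieTripleSystem {M : Type*} [AddCommGroup M] (B : M → M → M → M) : Prop where
  antisymm : ∀ a b c, B a b c = -B b a c
  jacobi : ∀ a b c, B a b c + B b c a + B c a b = 0
  derivation : ∀ a b u v w, B a b (B u v w) = B (B a b u) v w + B u (B a b v) w + B u v (B a b w)

/-- The fields are (R1), (R2), the two identities of (R3), and (R4). -/
structure IsGeneralRepresentation {K 𝔪 E : Type*} [CommRing K] [AddCommGroup E] [Module K E]
    (L : 𝔪 → 𝔪 → 𝔪 → 𝔪) (r m : 𝔪 → 𝔪 → Module.End K E) : Prop where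
  r_antisymm : ∀ X Y, r X Y = -r Y X
  m_sub_m : ∀ X Z, m X Z - m Z X = r X Z
  r_bracket : ∀ X Y U W, r (L X Y U) W + r U (L X Y W) = r X Y * r U W - r U W * r X Y
  m_bracket : ∀ X Y U W, m (L X Y U) W + m U (L X Y W) = r X Y * m U W - m U W * r X Y
  m_bracket_right : ∀ X U V W, m X (L U V W) - r U V * m X W = m U W * m X V - m V W * m X U

section Semidirect

variable {K 𝔪 E : Type*} [CommRing K] [AddCommGroup 𝔪] [AddCommGroup E] [Module K E]

def semidirectBracket (L : 𝔪 → 𝔪 → 𝔪 → 𝔪) (r m : 𝔪 → 𝔪 → Module.End K E) :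
    𝔪 × E → 𝔪 × E → 𝔪 × E → 𝔪 × E :=
  fun a b c => (L a.1 b.1 c.1, r a.1 b.1 c.2 + m a.1 c.1 b.2 - m b.1 c.1 a.2)

variable {L : 𝔪 → 𝔪 → 𝔪 → 𝔪} {r m : 𝔪 → 𝔪 → Module.End K E}

theorem IsGeneralRepresentation.isLieTripleSystem_semidirectBracket (hL : IsLieTripleSystem L)
    (h : IsGeneralRepresentation L r m) : IsLieTripleSystem (semidirectBracket L r m) where
  antisymm a b c := by
    refine Prod.ext (hL.antisymm _ _ _) ?_
    simp only [semidirectBracket, Prod.snd_neg, h.r_antisymm a.1 b.1, LinearMap.neg_apply]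
    abel
  jacobi a b c := by
    refine Prod.ext (hL.jacobi _ _ _) ?_
    have hm_swap (X Y : 𝔪) (v : E) : m X Y v = m Y X v + r X Y v := by
      rw [← h.m_sub_m, LinearMap.sub_apply, add_sub_cancel]
    simp only [semidirectBracket, Prod.snd_add, Prod.snd_zero, hm_swap a.1 b.1,
      hm_swap b.1 c.1, hm_swap c.1 a.1]
    abel
  derivation a b u v w := by
    refine Prod.ext (hL.derivation _ _ _ _ _) ?_
    obtain ⟨X, a₂⟩ := a
    obtain ⟨Y, b₂⟩ := b
    obtain ⟨U, u₂⟩ := u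
    obtain ⟨V, v₂⟩ := v
    obtain ⟨W, w₂⟩ := w
    have hrr := LinearMap.congr_fun (h.r_bracket X Y U V) w₂
    have hmU := LinearMap.congr_fun (h.m_bracket X Y U W) v₂
    have hmV := LinearMap.congr_fun (h.m_bracket X Y V W) u₂
    have hmX := LinearMap.congr_fun (h.m_bracket_right X U V W) b₂
    have hmY := LinearMap.congr_fun (h.m_bracket_right Y U V W) a₂
    simp only [LinearMap.add_apply, LinearMap.sub_apply, Module.End.mul_apply] at hrr hmU hmV hmX hmY
    simp only [semidirectBracket, Prod.snd_add, map_add, map_sub]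
    linear_combination (norm := abel) -hrr - hmU + hmV + hmX - hmY

end Semidirect

section JordanExtension

variable {K 𝔪 : Type*} [CommRing K] [AddCommGroup 𝔪] [Module K 𝔪]
  {L T : 𝔪 →ₗ[K] 𝔪 →ₗ[K] 𝔪 →ₗ[K] 𝔪}

def twistedM (T : 𝔪 →ₗ[K] 𝔪 →ₗ[K] 𝔪 →ₗ[K] 𝔪) (X Z : 𝔪) : Module.End K 𝔪 :=
  -((T X).flip Z + (T.flip X).flip Z)

@[simp]
theorem twistedM_apply (X Z v : 𝔪) : twistedM T X Z v = -(T X v Z + T v X Z) := rfl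

theorem twistedM_sub_twistedM (jt1 : ∀ u v w, T u v w = T w v u)
    (hext : ∀ X Y Z, T X Y Z - T Y X Z = L X Y Z) (X Z : 𝔪) :
    twistedM T X Z - twistedM T Z X = L X Z := by
  ext v
  simp only [LinearMap.sub_apply, twistedM_apply]
  linear_combination (norm := abel) jt1 v Z X - jt1 v X Z - jt1 X v Z + hext X Z v

theorem jordanExtension_derivation
    (jt2 : ∀ u v x y z, T u v (T x y z) = T (T u v x) y z - T x (T v u y) z + T x y (T u v z))
    (hext : ∀ X Y Z, T X Y Z - T Y X Z = L X Y Z) (X Y x y z : 𝔪) :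
    L X Y (T x y z) = T (L X Y x) y z + T x (L X Y y) z + T x y (L X Y z) := by
  simp only [← hext, map_sub, LinearMap.sub_apply]
  linear_combination (norm := abel) jt2 X Y x y z - jt2 Y X x y z

theorem twistedM_bracket
    (jt2 : ∀ u v x y z, T u v (T x y z) = T (T u v x) y z - T x (T v u y) z + T x y (T u v z))
    (hext : ∀ X Y Z, T X Y Z - T Y X Z = L X Y Z) (X Y U W : 𝔪) :
    twistedM T (L X Y U) W + twistedM T U (L X Y W) =
      L X Y * twistedM T U W - twistedM T U W * L X Y := by
  ext v
  simp only [LinearMap.add_apply, LinearMap.sub_apply, Module.End.mul_apply, twistedM_apply,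
    map_neg, map_add, jordanExtension_derivation jt2 hext]
  abel

theorem twistedM_bracket_right
    (jt2 : ∀ u v x y z, T u v (T x y z) = T (T u v x) y z - T x (T v u y) z + T x y (T u v z))
    (hext : ∀ X Y Z, T X Y Z - T Y X Z = L X Y Z) (X U V W : 𝔪) :
    twistedM T X (L U V W) - L U V * twistedM T X W =
      twistedM T U W * twistedM T X V - twistedM T V W * twistedM T X U := by
  ext z
  simp only [LinearMap.sub_apply, Module.End.mul_apply, twistedM_apply, map_neg, map_add, ← hext,
    map_sub]
  linear_combination (norm := abel) jt2 X z V U W + jt2 z X V U W - jt2 z X U V W - jt2 X z U V W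

theorem isGeneralRepresentation_twistedM
    (lt1 : ∀ X Y Z, L X Y Z = -L Y X Z)
    (lt3 : ∀ X Y U V W, L X Y (L U V W) = L (L X Y U) V W + L U (L X Y V) W + L U V (L X Y W))
    (jt1 : ∀ u v w, T u v w = T w v u)
    (jt2 : ∀ u v x y z, T u v (T x y z) = T (T u v x) y z - T x (T v u y) z + T x y (T u v z))
    (hext : ∀ X Y Z, T X Y Z - T Y X Z = L X Y Z) :
    IsGeneralRepresentation (fun X Y Z => L X Y Z) (fun X Y => L X Y) (twistedM T) where
  r_antisymm X Y := LinearMap.ext (lt1 X Y)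
  m_sub_m := twistedM_sub_twistedM jt1 hext
  r_bracket X Y U W := by
    ext v
    simp only [LinearMap.add_apply, LinearMap.sub_apply, Module.End.mul_apply]
    linear_combination (norm := abel) -lt3 X Y U W v
  m_bracket := twistedM_bracket jt2 hext
  m_bracket_right := twistedM_bracket_right jt2 hext

end JordanExtension

theorem twisted_regular_representation_general
    (K : Type*) [CommRing K]
    (𝔪 : Type*) [AddCommGroup 𝔪] [Module K 𝔪]
    (L : 𝔪 →ₗ[K] 𝔪 →ₗ[K] 𝔪 →ₗ[K] 𝔪)
    (lt1 : ∀ X Y Z, L X Y Z = - L Y X Z)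
    (lt2 : ∀ X Y Z, L X Y Z + L Y Z X + L Z X Y = 0)
    (lt3 : ∀ X Y U V W, L X Y (L U V W) =
      L (L X Y U) V W + L U (L X Y V) W + L U V (L X Y W))
    (T : 𝔪 →ₗ[K] 𝔪 →ₗ[K] 𝔪 →ₗ[K] 𝔪)
    (jt1 : ∀ u v w, T u v w = T w v u)
    (jt2 : ∀ u v x y z, T u v (T x y z) =
      T (T u v x) y z - T x (T v u y) z + T x y (T u v z))
    (hext : ∀ X Y Z, T X Y Z - T Y X Z = L X Y Z) :
    -- 𝔪 ⊕ 𝔪 with the twisted bracket is a Lie triple system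
    (let B : 𝔪 × 𝔪 → 𝔪 × 𝔪 → 𝔪 × 𝔪 → 𝔪 × 𝔪 := fun a b c =>
      (L a.1 b.1 c.1,
       L a.1 b.1 c.2 - T a.1 b.2 c.1 - T b.2 a.1 c.1
         + T b.1 a.2 c.1 + T a.2 b.1 c.1)
     (∀ a b c, B a b c = - B b a c) ∧
     (∀ a b c, B a b c + B b c a + B c a b = 0) ∧
     (∀ a b u v w, B a b (B u v w) =
       B (B a b u) v w + B u (B a b v) w + B u v (B a b w))) ∧
    -- equivalently, (r̃, m̃) is a general representation of 𝔪 on 𝔪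
    (let r : 𝔪 → 𝔪 → Module.End K 𝔪 := fun X Y => L X Y
     let m : 𝔪 → 𝔪 → Module.End K 𝔪 :=
       fun X Z => -((T X).flip Z + (T.flip X).flip Z)
     -- (R1)
     (∀ X Y, r X Y = - r Y X) ∧
     -- (R2)
     (∀ X Z, m X Z - m Z X = r X Z) ∧
     -- (R3), first identity
     (∀ X Y U W, r (L X Y U) W + r U (L X Y W) =
       r X Y * r U W - r U W * r X Y) ∧
     -- (R3), second identity
     (∀ X Y U W, m (L X Y U) W + m U (L X Y W) =
       r X Y * m U W - m U W * r X Y) ∧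
     -- (R4)
     (∀ X U V W, m X (L U V W) - r U V * m X W =
       m U W * m X V - m V W * m X U) ∧
     -- the r-component coincides with the regular one
     (∀ X Y : 𝔪, r X Y = L X Y)) := by
  have hrep := isGeneralRepresentation_twistedM lt1 lt3 jt1 jt2 hext
  refine ⟨?_, hrep.r_antisymm, hrep.m_sub_m, hrep.r_bracket, hrep.m_bracket, hrep.m_bracket_right,
    fun _ _ => rfl⟩
  intro B
  have hB : B = semidirectBracket (fun X Y Z => L X Y Z) (fun X Y => L X Y) (twistedM T) := by
    ext a b c
    · rfl
    · simp only [B, semidirectBracket, twistedM_apply]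
      abel
  have hlts := hrep.isLieTripleSystem_semidirectBracket ⟨lt1, lt2, lt3⟩
  rw [hB]
  exact ⟨hlts.antisymm, hlts.jacobi, hlts.derivation⟩

theorem twisted_regular_representation
    (K : Type*) [CommRing K] [Invertible (2 : K)]
    (𝔪 : Type*) [AddCommGroup 𝔪] [Module K 𝔪]
    (L : 𝔪 →ₗ[K] 𝔪 →ₗ[K] 𝔪 →ₗ[K] 𝔪)
    (lt1 : ∀ X Y Z, L X Y Z = - L Y X Z)
    (lt2 : ∀ X Y Z, L X Y Z + L Y Z X + L Z X Y = 0)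
    (lt3 : ∀ X Y U V W, L X Y (L U V W) =
      L (L X Y U) V W + L U (L X Y V) W + L U V (L X Y W))
    (T : 𝔪 →ₗ[K] 𝔪 →ₗ[K] 𝔪 →ₗ[K] 𝔪)
    (jt1 : ∀ u v w, T u v w = T w v u)
    (jt2 : ∀ u v x y z, T u v (T x y z) =
      T (T u v x) y z - T x (T v u y) z + T x y (T u v z))
    (hext : ∀ X Y Z, T X Y Z - T Y X Z = L X Y Z) :
    -- 𝔪 ⊕ 𝔪 with the twisted bracket is a Lie triple system
    (let B : 𝔪 × 𝔪 → 𝔪 × 𝔪 → 𝔪 × 𝔪 → 𝔪 × 𝔪 := fun a b c =>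
      (L a.1 b.1 c.1,
       L a.1 b.1 c.2 - T a.1 b.2 c.1 - T b.2 a.1 c.1
         + T b.1 a.2 c.1 + T a.2 b.1 c.1)
     (∀ a b c, B a b c = - B b a c) ∧
     (∀ a b c, B a b c + B b c a + B c a b = 0) ∧
     (∀ a b u v w, B a b (B u v w) =
       B (B a b u) v w + B u (B a b v) w + B u v (B a b w))) ∧
    -- equivalently, (r̃, m̃) is a general representation of 𝔪 on 𝔪
    (let r : 𝔪 → 𝔪 → Module.End K 𝔪 := fun X Y => L X Y
     let m : 𝔪 → 𝔪 → Module.End K 𝔪 :=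
       fun X Z => -((T X).flip Z + (T.flip X).flip Z)
     -- (R1)
     (∀ X Y, r X Y = - r Y X) ∧
     -- (R2)
     (∀ X Z, m X Z - m Z X = r X Z) ∧
     -- (R3), first identity
     (∀ X Y U W, r (L X Y U) W + r U (L X Y W) =
       r X Y * r U W - r U W * r X Y) ∧
     -- (R3), second identity
     (∀ X Y U W, m (L X Y U) W + m U (L X Y W) =
       r X Y * m U W - m U W * r X Y) ∧
     -- (R4)
     (∀ X U V W, m X (L U V W) - r U V * m X W =
       m U W * m X V - m V W * m X U) ∧
     -- the r-component coincides with the regular one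
     (∀ X Y : 𝔪, r X Y = L X Y)) :=
  twisted_regular_representation_general K 𝔪 L lt1 lt2 lt3 T jt1 jt2 hext
end

section
/- Let K be a commutative ring in which 2 is invertible, (𝔪, [·,·,·]) a Lie triple system over K, and T a Jordan extension of 𝔪 (a Jordan triple system on 𝔪 with T(X,Y,Z) - T(Y,X,Z) = [X,Y,Z]). Let M(X,Z) := [X,·,Z] be the m-component of the regular representation and m̃(X,Z) := -(T(X,·,Z) + T(·,X,Z)) the m-component of the twisted regular representation. If m̃(X,Z) = M(X,Z) for all X,Z ∈ 𝔪 (i.e. the twisted regular representation coincides with the regular one), then T = 0 and hence the triple bracket [·,·,·] of 𝔪 vanishes identically. Moreover, m̃ satisfies the symmetry m̃(X,Z)Y = m̃(Y,Z)X for all X,Y,Z, whereas M satisfies the antisymmetry M(X,Z)Y = -M(Y,Z)X for all X,Y,Z. -/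
theorem eq_zero_of_neg_add_eq_sub (K : Type*) [Ring K] [Invertible (2 : K)]
    {M : Type*} [AddCommGroup M] [Module K M] {a b : M} (h : -(a + b) = a - b) :
    a = 0 := by
  have h2 : (2 : K) • a = 0 := by
    rw [two_smul]
    linear_combination (norm := abel) -h
  exact (isUnit_of_invertible (2 : K)).smul_eq_zero.mp h2

theorem twisted_equals_regular_implies_trivial_general
    (K : Type*) [CommRing K] [Invertible (2 : K)]
    (𝔪 : Type*) [AddCommGroup 𝔪] [Module K 𝔪]
    (L : 𝔪 →ₗ[K] 𝔪 →ₗ[K] 𝔪 →ₗ[K] 𝔪)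
    (lt1 : ∀ X Y Z, L X Y Z = - L Y X Z)
    (T : 𝔪 →ₗ[K] 𝔪 →ₗ[K] 𝔪 →ₗ[K] 𝔪)
    (hext : ∀ X Y Z, T X Y Z - T Y X Z = L X Y Z) :
    -- if m̃ = M then T = 0 and the bracket vanishes
    ((∀ X Z Y : 𝔪, -(T X Y Z + T Y X Z) = L X Y Z) →
      (∀ x y z : 𝔪, T x y z = 0) ∧ (∀ x y z : 𝔪, L x y z = 0)) ∧
    -- m̃(X,Z)Y = m̃(Y,Z)X
    (∀ X Y Z : 𝔪, -(T X Y Z + T Y X Z) = -(T Y X Z + T X Y Z)) ∧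
    -- M(X,Z)Y = -M(Y,Z)X
    (∀ X Y Z : 𝔪, L X Y Z = -(L Y X Z)) := by
  refine ⟨fun h => ?_, fun X Y Z => by rw [add_comm], lt1⟩
  have hT : ∀ x y z : 𝔪, T x y z = 0 := fun x y z =>
    eq_zero_of_neg_add_eq_sub K ((h x z y).trans (hext x y z).symm)
  exact ⟨hT, fun x y z => by rw [← hext, hT, hT, sub_zero]⟩

theorem twisted_equals_regular_implies_trivial
    (K : Type*) [CommRing K] [Invertible (2 : K)]
    (𝔪 : Type*) [AddCommGroup 𝔪] [Module K 𝔪]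
    (L : 𝔪 →ₗ[K] 𝔪 →ₗ[K] 𝔪 →ₗ[K] 𝔪)
    (lt1 : ∀ X Y Z, L X Y Z = - L Y X Z)
    (lt2 : ∀ X Y Z, L X Y Z + L Y Z X + L Z X Y = 0)
    (lt3 : ∀ X Y U V W, L X Y (L U V W) =
      L (L X Y U) V W + L U (L X Y V) W + L U V (L X Y W))
    (T : 𝔪 →ₗ[K] 𝔪 →ₗ[K] 𝔪 →ₗ[K] 𝔪)
    (jt1 : ∀ u v w, T u v w = T w v u)
    (jt2 : ∀ u v x y z, T u v (T x y z) =
      T (T u v x) y z - T x (T v u y) z + T x y (T u v z))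
    (hext : ∀ X Y Z, T X Y Z - T Y X Z = L X Y Z) :
    -- if m̃ = M then T = 0 and the bracket vanishes
    ((∀ X Z Y : 𝔪, -(T X Y Z + T Y X Z) = L X Y Z) →
      (∀ x y z : 𝔪, T x y z = 0) ∧ (∀ x y z : 𝔪, L x y z = 0)) ∧
    -- m̃(X,Z)Y = m̃(Y,Z)X
    (∀ X Y Z : 𝔪, -(T X Y Z + T Y X Z) = -(T Y X Z + T X Y Z)) ∧
    -- M(X,Z)Y = -M(Y,Z)X
    (∀ X Y Z : 𝔪, L X Y Z = -(L Y X Z)) :=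
  twisted_equals_regular_implies_trivial_general K 𝔪 L lt1 T hext
end

section
/- Let K be a commutative ring in which 2 is invertible, 𝔤 a Lie algebra over K with an involutive Lie algebra automorphism σ, and (W, τ) a (𝔤,σ)-module with involution, i.e. W is a 𝔤-module and τ : W → W is a K-linear involution with τ(X•w) = σ(X)•τ(w) for all X ∈ 𝔤, w ∈ W. Equip the dual module W* = Hom_K(W, K) with the dual 𝔤-action (X•f)(w) := -f(X•w) and with the transpose involution τ*(f) := f∘τ. Then (W*, τ*) is again a (𝔤,σ)-module with involution: (τ*)² = id and τ*(X•f) = σ(X)•τ*(f) for all X ∈ 𝔤, f ∈ W*. Moreover, for X, Z in the -1-eigenspace 𝔪 of σ, the operator -ρ*(Z)∘ρ*(X) on W* (where ρ*(X)f := X•f) equals the dual operator of -ρ(X)∘ρ(Z) on W; i.e. the m-component of the dual representation satisfies m*(X,Z) = m(Z,X)*. -/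
/-! Transposition reverses products, so `f ↦ -f*` turns commutators into commutators and the
contragredient `X ↦ -ρ(X)*` is again a representation; dualizing `τ ∘ ρ(σ X) = ρ(X) ∘ τ`
shows that `τ*` intertwines it with its twist by `σ` in the same way. -/

namespace LinearMap

section CommSemiring

variable {K W : Type*} [CommSemiring K] [AddCommMonoid W] [Module K W]

theorem dualMap_mul (f g : Module.End K W) : (f * g).dualMap = g.dualMap * f.dualMap :=
  rfl

theorem dualMap_one : (1 : Module.End K W).dualMap = 1 :=
  dualMap_id

theorem dualMap_involutive {τ : Module.End K W} (hτ : Function.Involutive τ) :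
    Function.Involutive τ.dualMap := by
  have hτ_sq : τ * τ = 1 := LinearMap.ext hτ
  intro f
  rw [← Module.End.mul_apply, ← dualMap_mul, hτ_sq, dualMap_one, Module.End.one_apply]

theorem _root_.SemiconjBy.dualMap {τ f g : Module.End K W} (h : SemiconjBy τ f g) :
    SemiconjBy τ.dualMap g.dualMap f.dualMap := by
  rw [SemiconjBy, ← dualMap_mul, ← dualMap_mul, h.eq]

end CommSemiring

section CommRing

variable {K W : Type*} [CommRing K] [AddCommGroup W] [Module K W]

theorem dualMap_neg (f : Module.End K W) : (-f).dualMap = -f.dualMap :=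
  map_neg Module.Dual.transpose f

theorem dualMap_sub (f g : Module.End K W) : (f - g).dualMap = f.dualMap - g.dualMap :=
  map_sub Module.Dual.transpose f g

theorem neg_dualMap_mul_neg_dualMap (f g : Module.End K W) :
    -f.dualMap * -g.dualMap = (g * f).dualMap := by
  ext φ w
  simp

theorem neg_dualMap_lie (f g : Module.End K W) :
    -⁅f, g⁆.dualMap = ⁅-f.dualMap, -g.dualMap⁆ := by
  rw [Ring.lie_def, Ring.lie_def, neg_dualMap_mul_neg_dualMap, neg_dualMap_mul_neg_dualMap,
    ← dualMap_sub, ← dualMap_neg, neg_sub]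

end CommRing

end LinearMap

theorem dual_module_with_involution_general
    (K : Type*) [CommRing K]
    (𝔤 : Type*) [LieRing 𝔤] [LieAlgebra K 𝔤]
    (σ : 𝔤 →ₗ[K] 𝔤)
    (hinv : ∀ X, σ (σ X) = X)
    (W : Type*) [AddCommGroup W] [Module K W]
    (ρ : 𝔤 →ₗ[K] Module.End K W)
    (hρ : ∀ X Y, ρ ⁅X, Y⁆ = ρ X * ρ Y - ρ Y * ρ X)
    (τ : W →ₗ[K] W)
    (hτ2 : ∀ w, τ (τ w) = w)
    (hτρ : ∀ X w, τ (ρ X w) = ρ (σ X) (τ w)) :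
    let ρd : 𝔤 → Module.End K (Module.Dual K W) := fun X => -(ρ X).dualMap
    let τd : Module.End K (Module.Dual K W) := τ.dualMap
    -- τ* is an involution
    (∀ f : Module.Dual K W, τd (τd f) = f) ∧
    -- τ* is compatible with σ
    (∀ (X : 𝔤) (f : Module.Dual K W), τd (ρd X f) = ρd (σ X) (τd f)) ∧
    -- the dual action is a 𝔤-module structure
    (∀ X Y : 𝔤, ρd ⁅X, Y⁆ = ρd X * ρd Y - ρd Y * ρd X) ∧
    -- m*(X,Z) = m(Z,X)* for X, Z in the -1-eigenspace of σ
    (∀ X Z : 𝔤, σ X = -X → σ Z = -Z →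
      -(ρd Z * ρd X) = LinearMap.dualMap (-(ρ X * ρ Z))) := by
  dsimp only
  have hτ_semiconj (X : 𝔤) : SemiconjBy τ (ρ (σ X)) (ρ X) :=
    LinearMap.ext fun w => by simpa only [hinv, Module.End.mul_apply] using hτρ (σ X) w
  refine ⟨LinearMap.dualMap_involutive hτ2, fun X f => ?_, fun X Y => ?_, fun X Z _ _ => ?_⟩
  · simpa only [LinearMap.dualMap_neg, Module.End.mul_apply] using
      LinearMap.congr_fun (hτ_semiconj X).neg_right.dualMap f
  · simpa only [hρ, Ring.lie_def] using LinearMap.neg_dualMap_lie (ρ X) (ρ Y)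
  · rw [LinearMap.neg_dualMap_mul_neg_dualMap, LinearMap.dualMap_neg]

theorem dual_module_with_involution
    (K : Type*) [CommRing K] [Invertible (2 : K)]
    (𝔤 : Type*) [LieRing 𝔤] [LieAlgebra K 𝔤]
    (σ : 𝔤 →ₗ[K] 𝔤)
    (hinv : ∀ X, σ (σ X) = X)
    (hbr : ∀ X Y, σ ⁅X, Y⁆ = ⁅σ X, σ Y⁆)
    (W : Type*) [AddCommGroup W] [Module K W]
    (ρ : 𝔤 →ₗ[K] Module.End K W)
    (hρ : ∀ X Y, ρ ⁅X, Y⁆ = ρ X * ρ Y - ρ Y * ρ X)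
    (τ : W →ₗ[K] W)
    (hτ2 : ∀ w, τ (τ w) = w)
    (hτρ : ∀ X w, τ (ρ X w) = ρ (σ X) (τ w)) :
    let ρd : 𝔤 → Module.End K (Module.Dual K W) := fun X => -(ρ X).dualMap
    let τd : Module.End K (Module.Dual K W) := τ.dualMap
    -- τ* is an involution
    (∀ f : Module.Dual K W, τd (τd f) = f) ∧
    -- τ* is compatible with σ
    (∀ (X : 𝔤) (f : Module.Dual K W), τd (ρd X f) = ρd (σ X) (τd f)) ∧
    -- the dual action is a 𝔤-module structure
    (∀ X Y : 𝔤, ρd ⁅X, Y⁆ = ρd X * ρd Y - ρd Y * ρd X) ∧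
    -- m*(X,Z) = m(Z,X)* for X, Z in the -1-eigenspace of σ
    (∀ X Z : 𝔤, σ X = -X → σ Z = -Z →
      -(ρd Z * ρd X) = LinearMap.dualMap (-(ρ X * ρ Z))) :=
  dual_module_with_involution_general K 𝔤 σ hinv W ρ hρ τ hτ2 hτρ
end
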